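/- arXiv:2311.17687 — 5 statements merged into one kernel-verified Lean document; each statement's English description precedes it below -/
import Mathlib

section
/- Let 1 < p < ∞ and define U := { x = (x₁, x') ∈ ℝ × ℝ^{d-1} : |x|^p ≥ ((x₁-1)² + |x'|²)^{p/2} + 2 }. Then there exists a constant c₀ = c₀(p, α) and a cone with vertex (c₀, 0), aperture α ∈ (0, π), and axis (1,0,…,0) which is contained in U. -/
set_option maxHeartbeats 800000 in
lemma cone_barrier_aux (p α : ℝ) (hp : 1 < p) (hα : 0 < α) :
    ∃ c₀ : ℝ, ∀ x₁ t : ℝ, 0 ≤ t → t ≤ α * (x₁ - c₀) →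
      ((x₁ - 1) ^ 2 + t ^ 2) ^ (p / 2) + 2 ≤ (x₁ ^ 2 + t ^ 2) ^ (p / 2) := by
  have hr : 0 < p / 2 := by linarith
  have hp1 : 0 < p - 1 := by linarith
  have h2p : (0:ℝ) < 2 ^ p := Real.rpow_pos_of_pos (by norm_num) p
  obtain ⟨C, hC⟩ : ∃ C : ℝ, C = 2 * 2 ^ p * (1 + α ^ 2) / (p / 2) := ⟨_, rfl⟩
  have hCpos : 0 < C := by rw [hC]; positivity
  refine ⟨2 + C ^ (p - 1)⁻¹, ?_⟩
  intro x₁ t ht h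
  have hCr : (0:ℝ) ≤ C ^ (p - 1)⁻¹ := by positivity
  have hx₁c : 0 ≤ x₁ - (2 + C ^ (p - 1)⁻¹) := by
    nlinarith [ht.trans h]
  have hx₁ : 2 ≤ x₁ := by nlinarith
  have hx₁0 : (0:ℝ) < x₁ := by linarith
  set A : ℝ := x₁ ^ 2 + t ^ 2 with hAdef
  set B : ℝ := (x₁ - 1) ^ 2 + t ^ 2 with hBdef
  clear_value A B
  have hApos : 0 < A := by rw [hAdef]; positivity
  have hBpos : 0 < B := by rw [hBdef]; nlinarith
  have htx : t ≤ α * x₁ := by nlinarith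
  have hAup : A ≤ (1 + α ^ 2) * x₁ ^ 2 := by nlinarith
  have hBlow : (x₁ / 2) ^ 2 ≤ B := by nlinarith
  have hABd : A - B = 2 * x₁ - 1 := by rw [hAdef, hBdef]; ring
  have hABnn : 0 ≤ A - B := by rw [hABd]; linarith
  -- log bound
  have hlog : (A - B) / A ≤ Real.log A - Real.log B := by
    have h1 : Real.log (B / A) ≤ B / A - 1 := Real.log_le_sub_one_of_pos (by positivity)
    rw [Real.log_div hBpos.ne' hApos.ne'] at h1
    have h2 : (A - B) / A = 1 - B / A := by field_simp
    linarith
  -- key exp inequality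
  have key : B ^ (p / 2) + (p / 2) * B ^ (p / 2) * ((A - B) / A) ≤ A ^ (p / 2) := by
    have h2 : A ^ (p / 2) = B ^ (p / 2) *
        Real.exp ((p / 2) * (Real.log A - Real.log B)) := by
      rw [Real.rpow_def_of_pos hApos, Real.rpow_def_of_pos hBpos, ← Real.exp_add]
      ring_nf
    have h3 : 1 + (p / 2) * ((A - B) / A) ≤
        Real.exp ((p / 2) * (Real.log A - Real.log B)) := by
      have h4 : (p / 2) * ((A - B) / A) ≤ (p / 2) * (Real.log A - Real.log B) :=
        mul_le_mul_of_nonneg_left hlog hr.le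
      linarith [Real.add_one_le_exp ((p / 2) * (Real.log A - Real.log B))]
    have h5 : B ^ (p / 2) * (1 + (p / 2) * ((A - B) / A)) ≤
        B ^ (p / 2) * Real.exp ((p / 2) * (Real.log A - Real.log B)) :=
      mul_le_mul_of_nonneg_left h3 (Real.rpow_nonneg hBpos.le _)
    rw [h2]
    nlinarith [h5]
  -- lower bound for B^(p/2)
  have hBr : (x₁ / 2) ^ p ≤ B ^ (p / 2) := by
    have h6 : ((x₁ / 2) ^ 2) ^ (p / 2) ≤ B ^ (p / 2) :=
      Real.rpow_le_rpow (by positivity) hBlow hr.le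
    have h7 : ((x₁ / 2) ^ 2) ^ (p / 2) = (x₁ / 2) ^ p := by
      rw [← Real.rpow_natCast (x₁ / 2) 2, ← Real.rpow_mul (by positivity)]
      push_cast
      congr 1
      ring
    linarith [h7 ▸ h6]
  -- lower bound for (A-B)/A
  have hfrac : 1 / ((1 + α ^ 2) * x₁) ≤ (A - B) / A := by
    have h8 : x₁ / ((1 + α ^ 2) * x₁ ^ 2) ≤ (A - B) / A := by
      apply div_le_div₀ hABnn (by rw [hABd]; linarith) hApos hAup
    have h9 : x₁ / ((1 + α ^ 2) * x₁ ^ 2) = 1 / ((1 + α ^ 2) * x₁) := by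
      field_simp
    linarith [h9 ▸ h8]
  -- lower bound for x₁^(p-1)
  have hx₁p : C ≤ x₁ ^ (p - 1) := by
    have h10 : C ^ (p - 1)⁻¹ ≤ x₁ := by linarith
    have h11 := Real.rpow_le_rpow hCr h10 hp1.le
    rwa [Real.rpow_inv_rpow hCpos.le hp1.ne'] at h11
  -- assemble: (p/2) * (x₁/2)^p * (1/((1+α²)x₁)) ≥ 2
  have hxp : (x₁ / 2) ^ p = x₁ ^ (p - 1) * x₁ / 2 ^ p := by
    rw [Real.div_rpow hx₁0.le (by norm_num)]
    congr 1
    nth_rewrite 1 [show p = p - 1 + 1 by ring]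
    rw [Real.rpow_add hx₁0, Real.rpow_one]
  have hfinal : 2 ≤ (p / 2) * (x₁ / 2) ^ p * (1 / ((1 + α ^ 2) * x₁)) := by
    rw [hxp]
    have hα2 : (0:ℝ) < 1 + α ^ 2 := by positivity
    have : (p / 2) * (x₁ ^ (p - 1) * x₁ / 2 ^ p) * (1 / ((1 + α ^ 2) * x₁))
        = (p / 2) * x₁ ^ (p - 1) / (2 ^ p * (1 + α ^ 2)) := by
      field_simp
    rw [this]
    rw [le_div_iff₀ (by positivity)]
    have h12 : (p / 2) * C = 2 * 2 ^ p * (1 + α ^ 2) := by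
      rw [hC, mul_comm, div_mul_cancel₀ _ hr.ne']
    have h13 : (p / 2) * C ≤ (p / 2) * x₁ ^ (p - 1) :=
      mul_le_mul_of_nonneg_left hx₁p hr.le
    rw [h12] at h13
    linarith
  -- combine
  have hmid : (p / 2) * (x₁ / 2) ^ p * (1 / ((1 + α ^ 2) * x₁)) ≤
      (p / 2) * B ^ (p / 2) * ((A - B) / A) := by
    have hBnn : (0:ℝ) ≤ B ^ (p / 2) := Real.rpow_nonneg hBpos.le _
    have := mul_le_mul hBr hfrac (by positivity) hBnn
    nlinarith [this, hr]
  linarith [key, hfinal.trans hmid]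

/-- Cone barrier lemma: for `1 < p` and aperture `α ∈ (0, π)`, there is a vertex
`(c₀, 0)` such that the cone `{(x₁, x') : ‖x'‖ ≤ α (x₁ - c₀)}` with axis `(1,0,…,0)`
is contained in `U = {x : |x|^p ≥ ((x₁-1)² + |x'|²)^{p/2} + 2}`. -/
theorem cone_barrier (d : ℕ) (p α : ℝ) (hp : 1 < p) (hα : α ∈ Set.Ioo 0 Real.pi) :
    ∃ c₀ : ℝ, ∀ (x₁ : ℝ) (x' : EuclideanSpace ℝ (Fin (d - 1))),
      ‖x'‖ ≤ α * (x₁ - c₀) →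
      ((x₁ - 1) ^ 2 + ‖x'‖ ^ 2) ^ (p / 2) + 2 ≤ (x₁ ^ 2 + ‖x'‖ ^ 2) ^ (p / 2) := by
  obtain ⟨c₀, hc⟩ := cone_barrier_aux p α hp hα.1
  exact ⟨c₀, fun x₁ x' h => hc x₁ ‖x'‖ (norm_nonneg _) h⟩
end

section
/- Let p ≥ 2 and c ≥ 1 + (2/p)^{1/(p-1)}. Then for all x ∈ ℝ^d with x₁ ≥ c, writing x = (x₁, x') ∈ ℝ × ℝ^{d-1}, one has |x|^p ≥ ((x₁ - 1)² + |x'|²)^{p/2} + 2. -/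
/-!
With `a = x₁ - 1` and `s = ‖x'‖²`, convexity of `t ↦ t ^ (p / 2)` bounds the increment
`((a + 1)² + s) ^ (p / 2) - (a² + s) ^ (p / 2)` below by its tangent-line value
`(p / 2) (a² + s) ^ (p / 2 - 1) (2a + 1) ≥ p a ^ (p - 1)`, and the choice of `c` is exactly
what makes `p a ^ (p - 1) ≥ 2`.
-/

open Real

lemma rpow_add_mul_rpow_sub_one_mul_sub_le {x y q : ℝ} (hy : 0 < y) (hx : 0 ≤ x) (hq : 1 ≤ q) :
    y ^ q + q * y ^ (q - 1) * (x - y) ≤ x ^ q := by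
  have hb := one_add_mul_self_le_rpow_one_add (s := x / y - 1)
    (by linarith [div_nonneg hx hy.le]) hq
  rw [add_sub_cancel, div_rpow hx hy.le, le_div_iff₀ (rpow_pos_of_pos hy q)] at hb
  calc y ^ q + q * y ^ (q - 1) * (x - y) = (1 + q * (x / y - 1)) * y ^ q := by
        rw [rpow_sub_one hy.ne']; field_simp
    _ ≤ x ^ q := hb

lemma rpow_sub_two_le_sq_add_rpow {a s p : ℝ} (ha : 0 ≤ a) (hs : 0 ≤ s) (hp : 2 ≤ p) :
    a ^ (p - 2) ≤ (a ^ 2 + s) ^ (p / 2 - 1) := by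
  calc a ^ (p - 2) = (a ^ 2) ^ (p / 2 - 1) := by
        rw [← rpow_natCast, ← rpow_mul ha]; congr 1; push_cast; ring
    _ ≤ (a ^ 2 + s) ^ (p / 2 - 1) := by
        gcongr
        · linarith
        · linarith

lemma sq_add_rpow_add_mul_rpow_sub_one_le {a s p : ℝ} (ha : 0 < a) (hs : 0 ≤ s) (hp : 2 ≤ p) :
    (a ^ 2 + s) ^ (p / 2) + p * a ^ (p - 1) ≤ ((a + 1) ^ 2 + s) ^ (p / 2) := by
  have tangent := rpow_add_mul_rpow_sub_one_mul_sub_le (x := (a + 1) ^ 2 + s)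
    (y := a ^ 2 + s) (q := p / 2) (by positivity) (by positivity) (by linarith)
  have slope : p * a ^ (p - 1) ≤
      p / 2 * (a ^ 2 + s) ^ (p / 2 - 1) * ((a + 1) ^ 2 + s - (a ^ 2 + s)) :=
    calc p * a ^ (p - 1) = p / 2 * a ^ (p - 2) * (2 * a) := by
          rw [show p - 1 = p - 2 + 1 by ring, rpow_add_one ha.ne']; ring
      _ ≤ p / 2 * (a ^ 2 + s) ^ (p / 2 - 1) * ((a + 1) ^ 2 + s - (a ^ 2 + s)) := by
          have hp0 : 0 ≤ p := by linarith
          gcongr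
          · exact rpow_sub_two_le_sq_add_rpow ha.le hs hp
          · nlinarith
  linarith

/-- Case `p ≥ 2` of the cone-barrier lemma: for `c ≥ 1 + (2/p)^{1/(p-1)}`, the
half-space `{x₁ ≥ c}` is contained in `U = {x : |x|^p ≥ ((x₁-1)² + |x'|²)^{p/2} + 2}`. -/
theorem halfspace_in_barrier (d : ℕ) (p c : ℝ) (hp : 2 ≤ p)
    (hc : 1 + (2 / p) ^ (1 / (p - 1)) ≤ c)
    (x₁ : ℝ) (x' : EuclideanSpace ℝ (Fin (d - 1))) (hx : c ≤ x₁) :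
    ((x₁ - 1) ^ 2 + ‖x'‖ ^ 2) ^ (p / 2) + 2 ≤ (x₁ ^ 2 + ‖x'‖ ^ 2) ^ (p / 2) := by
  have hp0 : 0 < p := by linarith
  have ha : (2 / p) ^ (p - 1)⁻¹ ≤ x₁ - 1 := by rw [← one_div]; linarith
  have ha0 : 0 < x₁ - 1 := (rpow_pos_of_pos (by positivity) _).trans_le ha
  have hpow : 2 / p ≤ (x₁ - 1) ^ (p - 1) :=
    (rpow_inv_le_iff_of_pos (by positivity) ha0.le (by linarith)).mp ha
  have hincr := sq_add_rpow_add_mul_rpow_sub_one_le ha0 (sq_nonneg ‖x'‖) hp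
  rw [sub_add_cancel] at hincr
  have : 2 ≤ p * (x₁ - 1) ^ (p - 1) := by rwa [div_le_iff₀' hp0] at hpow
  linarith
end

section
/- Let 1 < p ≤ 2, c ≥ 1/2, and define F(x, y) := (x² + y²)^{p/2} − ((x−1)² + y²)^{p/2} for x ≥ c, y ≥ 0. Then ∂_y F(x, y) ≤ 0, i.e. y ↦ F(x, y) is nonincreasing on [0, ∞) for each fixed x ≥ c. -/
/-! Writing `F(x, y) = g(y²)` with `g(t) = (x² + t)^{p/2} − ((x − 1)² + t)^{p/2}`, it suffices that
`g` is antitone on `[0, ∞)`. Since `x ≥ 1/2` gives `(x − 1)² ≤ x²`, this is the fact that the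
increments `t ↦ f(b + t) − f(a + t)` (`a ≤ b`) of a concave function `f` are antitone, applied to
the concave function `t ↦ t^{p/2}`. -/

open Set

section ConcaveIncrements

variable {𝕜 : Type*} [Field 𝕜] [LinearOrder 𝕜] [IsStrictOrderedRing 𝕜] {s : Set 𝕜} {f : 𝕜 → 𝕜}

/-- Two-point Karamata inequality: `v` and `u + w - v` are the convex combinations of `u` and `w`
with swapped weights. -/
theorem ConcaveOn.add_le_add_sub {u v w : 𝕜} (hf : ConcaveOn 𝕜 s f) (hu : u ∈ s) (hw : w ∈ s)
    (huv : u ≤ v) (hvw : v ≤ w) : f u + f w ≤ f v + f (u + w - v) := by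
  rcases huv.eq_or_lt with rfl | huv'
  · simp
  have hd : 0 < w - u := by linarith
  set l := (v - u) / (w - u)
  set m := (w - v) / (w - u)
  have hl : 0 ≤ l := div_nonneg (by linarith) hd.le
  have hm : 0 ≤ m := div_nonneg (by linarith) hd.le
  have hlm : m + l = 1 := by rw [← add_div]; exact div_eq_one_iff_eq hd.ne' |>.2 (by ring)
  have hv : m • u + l • w = v := by
    simp only [smul_eq_mul, l, m]; field_simp; ring
  have hv' : l • u + m • w = u + w - v := by
    simp only [smul_eq_mul, l, m]; field_simp; ring
  have h₁ := hf.2 hu hw hm hl hlm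
  have h₂ := hf.2 hu hw hl hm (by rwa [add_comm])
  rw [hv] at h₁
  rw [hv'] at h₂
  simp only [smul_eq_mul] at h₁ h₂
  have hsplit : f u + f w = (m * f u + l * f w) + (l * f u + m * f w) := by
    linear_combination (-(f u) - f w) * hlm
  linarith

theorem ConcaveOn.antitoneOn_sub_comp_add {a b : 𝕜} (hf : ConcaveOn 𝕜 (Ici a) f) (hab : a ≤ b) :
    AntitoneOn (fun t => f (b + t) - f (a + t)) (Ici 0) := by
  intro t ht r hr htr
  have key := hf.add_le_add_sub (u := a + t) (v := a + r) (w := b + r)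
    (by simpa using ht) (by simp only [mem_Ici] at hr ⊢; linarith) (by linarith) (by linarith)
  rw [show a + t + (b + r) - (a + r) = b + t by ring] at key
  linarith

end ConcaveIncrements

/-- For `1 < p ≤ 2`, `c ≥ 1/2` and `x ≥ c`, the function
`y ↦ F(x,y) = (x² + y²)^{p/2} − ((x−1)² + y²)^{p/2}` is nonincreasing on `[0, ∞)`. -/
theorem F_antitone_of_le_two (p c x : ℝ) (hp1 : 1 < p) (hp2 : p ≤ 2) (hc : 1 / 2 ≤ c)
    (hx : c ≤ x) :
    AntitoneOn (fun y : ℝ => (x ^ 2 + y ^ 2) ^ (p / 2) - ((x - 1) ^ 2 + y ^ 2) ^ (p / 2))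
      (Set.Ici (0 : ℝ)) := by
  have hsq : (x - 1) ^ 2 ≤ x ^ 2 := by nlinarith
  have hconc : ConcaveOn ℝ (Ici ((x - 1) ^ 2)) fun t : ℝ => t ^ (p / 2) :=
    (Real.concaveOn_rpow (by linarith) (by linarith)).subset (Ici_subset_Ici.2 (sq_nonneg _))
      (convex_Ici _)
  exact (hconc.antitoneOn_sub_comp_add hsq).comp_MonotoneOn pow_left_monotoneOn
    fun y _ => sq_nonneg y
end

section
/- Let 1 < p ≤ 2, α > 0, c ≥ 1/2 and x₁ ≥ c + 1. Then (x₁² + α²(x₁−c)²)^{p/2} − ((x₁−1)² + α²(x₁−c)²)^{p/2} ≥ p (x₁ − 1) / ((1 + α^{2−p}) x₁^{2−p} + α^{2−p} c^{2−p}). -/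
/-!
Write `s = x₁² + α²(x₁−c)²` and `r = (x₁−1)² + α²(x₁−c)²`, so `s − r = 2x₁ − 1 ≥ 2(x₁ − 1)`.
Concavity of `u ↦ u^{p/2}` (Bernoulli's inequality at `s`) gives
`s^{p/2} − r^{p/2} ≥ (p/2) s^{p/2−1} (s − r) ≥ p (x₁ − 1) / s^{(2−p)/2}`, and subadditivity of
`u ↦ u^{(2−p)/2}` bounds `s^{(2−p)/2} ≤ x₁^{2−p} + α^{2−p} (x₁−c)^{2−p}`, which is at most the
denominator since `0 ≤ c ≤ x₁`.
-/

open Real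

namespace Real

lemma mul_rpow_sub_one_mul_sub_le_rpow_sub_rpow {q r s : ℝ} (hq₀ : 0 ≤ q) (hq₁ : q ≤ 1)
    (hr : 0 ≤ r) (hs : 0 < s) : q * s ^ (q - 1) * (s - r) ≤ s ^ q - r ^ q := by
  have bernoulli := rpow_one_add_le_one_add_mul_self (s := r / s - 1)
    (by linarith [div_nonneg hr hs.le]) hq₀ hq₁
  rw [add_sub_cancel, div_rpow hr hs.le, div_le_iff₀ (rpow_pos_of_pos hs q)] at bernoulli
  rw [rpow_sub_one hs.ne']
  have : s ^ q * (1 + q * (r / s - 1)) = s ^ q - q * (s ^ q / s) * (s - r) := by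
    field_simp
    ring
  linarith

lemma sq_add_sq_rpow_div_two_le_rpow_add_rpow {t x y : ℝ} (ht₀ : 0 ≤ t) (ht₂ : t ≤ 2)
    (hx : 0 ≤ x) (hy : 0 ≤ y) : (x ^ 2 + y ^ 2) ^ (t / 2) ≤ x ^ t + y ^ t := by
  have sq_rpow_div_two {z : ℝ} (hz : 0 ≤ z) : (z ^ 2) ^ (t / 2) = z ^ t := by
    rw [← rpow_natCast, ← rpow_mul hz]
    ring_nf
  rw [← sq_rpow_div_two hx, ← sq_rpow_div_two hy]
  exact rpow_add_le_add_rpow (by positivity) (by positivity) (by linarith) (by linarith)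

end Real

/-- Lower bound along the cone boundary `y = α(x₁ − c)` for `1 < p ≤ 2`. -/
theorem cone_boundary_lower_bound (p α c x₁ : ℝ) (hp1 : 1 < p) (hp2 : p ≤ 2)
    (hα : 0 < α) (hc : 1 / 2 ≤ c) (hx : c + 1 ≤ x₁) :
    p * (x₁ - 1) / ((1 + α ^ (2 - p)) * x₁ ^ (2 - p) + α ^ (2 - p) * c ^ (2 - p))
      ≤ (x₁ ^ 2 + α ^ 2 * (x₁ - c) ^ 2) ^ (p / 2)
        - ((x₁ - 1) ^ 2 + α ^ 2 * (x₁ - c) ^ 2) ^ (p / 2) := by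
  set s := x₁ ^ 2 + α ^ 2 * (x₁ - c) ^ 2
  set r := (x₁ - 1) ^ 2 + α ^ 2 * (x₁ - c) ^ 2
  have hx₁ : 0 < x₁ := by linarith
  have hs : 0 < s := by positivity
  have hden : s ^ ((2 - p) / 2)
      ≤ (1 + α ^ (2 - p)) * x₁ ^ (2 - p) + α ^ (2 - p) * c ^ (2 - p) := by
    have hαx : (α * (x₁ - c)) ^ (2 - p) ≤ α ^ (2 - p) * x₁ ^ (2 - p) := by
      rw [mul_rpow hα.le (by linarith)]
      gcongr <;> linarith
    have : 0 ≤ α ^ (2 - p) * c ^ (2 - p) := by positivity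
    calc s ^ ((2 - p) / 2) = (x₁ ^ 2 + (α * (x₁ - c)) ^ 2) ^ ((2 - p) / 2) := by rw [mul_pow]
      _ ≤ x₁ ^ (2 - p) + (α * (x₁ - c)) ^ (2 - p) :=
        sq_add_sq_rpow_div_two_le_rpow_add_rpow (by linarith) (by linarith) hx₁.le
          (mul_nonneg hα.le (by linarith))
      _ ≤ _ := by linarith
  have hsr : 2 * (x₁ - 1) ≤ s - r := by simp only [s, r]; nlinarith
  calc p * (x₁ - 1) / ((1 + α ^ (2 - p)) * x₁ ^ (2 - p) + α ^ (2 - p) * c ^ (2 - p))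
      ≤ p * (x₁ - 1) / s ^ ((2 - p) / 2) := by gcongr; nlinarith
    _ = p * (x₁ - 1) * s ^ (p / 2 - 1) := by
      rw [show p / 2 - 1 = -((2 - p) / 2) by ring, rpow_neg hs.le, div_eq_mul_inv]
    _ ≤ p / 2 * s ^ (p / 2 - 1) * (s - r) := by
      have : 0 ≤ s ^ (p / 2 - 1) := by positivity
      nlinarith
    _ ≤ s ^ (p / 2) - r ^ (p / 2) :=
      mul_rpow_sub_one_mul_sub_le_rpow_sub_rpow (by linarith) (by linarith) (by positivity) hs
end

section
/- Let f: ℕ → [0, ∞) be nondecreasing (f(N−1) ≤ f(N)) and suppose for all N ≤ 2N' the abstract Hölder estimate f(N) ≤ f(N') + p^{(p-1)/p} f(N)^{(p−1)/p} · p^{1/p} f(N')^{1/p} holds for some fixed p > 1. Then there is a constant C = C(p) with f(N) ≤ C f(N') whenever N ≤ 2N'. -/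
/-!
Rewriting the cross term as `f(N)^{(p-1)/p} · (p f(N')^{1/p})` and applying Young's inequality with
the conjugate exponents `p/(p-1)` and `p` bounds it by `(p-1)/p · f(N) + p^{p-1} f(N')`. The
`f(N)` part is then absorbed into the left-hand side, leaving `f(N)/p ≤ (1 + p^{p-1}) f(N')`.
-/

open Real

namespace DoublingEstimate

variable {p : ℝ}

lemma rpow_sub_one_div_mul_rpow_one_div (hp : 0 < p) : p ^ ((p - 1) / p) * p ^ (1 / p) = p := by
  rw [← rpow_add hp, show (p - 1) / p + 1 / p = 1 by field_simp; ring, rpow_one]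

lemma young_rpow_cross_term (hp : 1 < p) {a b : ℝ} (ha : 0 ≤ a) (hb : 0 ≤ b) :
    a ^ ((p - 1) / p) * (p * b ^ (1 / p)) ≤ (p - 1) / p * a + p ^ (p - 1) * b := by
  have hp0 : 0 < p := one_pos.trans hp
  have hy := young_inequality_of_nonneg (rpow_nonneg ha ((p - 1) / p))
    (mul_nonneg hp0.le (rpow_nonneg hb (1 / p))) (HolderConjugate.conjExponent hp).symm
  have ha' : (a ^ ((p - 1) / p)) ^ (p / (p - 1)) = a := by
    rw [← rpow_mul ha, show (p - 1) / p * (p / (p - 1)) = 1 by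
      field_simp [sub_ne_zero.mpr hp.ne'], rpow_one]
  have hb' : (p * b ^ (1 / p)) ^ p = p ^ p * b := by
    rw [mul_rpow hp0.le (rpow_nonneg hb _), ← rpow_mul hb,
      show 1 / p * p = 1 by field_simp, rpow_one]
  have hpp : p ^ p / p = p ^ (p - 1) := by rw [rpow_sub_one hp0.ne']
  rw [conjExponent, ha', hb'] at hy
  calc a ^ ((p - 1) / p) * (p * b ^ (1 / p)) ≤ a / (p / (p - 1)) + p ^ p * b / p := hy
    _ = (p - 1) / p * a + p ^ (p - 1) * b := by rw [← hpp]; field_simp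

lemma le_mul_of_le_add_holder (hp : 1 < p) {a b : ℝ} (ha : 0 ≤ a) (hb : 0 ≤ b)
    (h : a ≤ b + p ^ ((p - 1) / p) * a ^ ((p - 1) / p) * (p ^ (1 / p) * b ^ (1 / p))) :
    a ≤ (p + p ^ p) * b := by
  have hp0 : 0 < p := one_pos.trans hp
  have hcross : p ^ ((p - 1) / p) * a ^ ((p - 1) / p) * (p ^ (1 / p) * b ^ (1 / p))
      = a ^ ((p - 1) / p) * (p * b ^ (1 / p)) := by
    calc _ = p ^ ((p - 1) / p) * p ^ (1 / p) * (a ^ ((p - 1) / p) * b ^ (1 / p)) := by ring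
      _ = _ := by rw [rpow_sub_one_div_mul_rpow_one_div hp0]; ring
  rw [hcross] at h
  have hyoung := young_rpow_cross_term hp ha hb
  have hpp : p ^ p = p * p ^ (p - 1) := by
    rw [rpow_sub_one hp0.ne']; field_simp
  have habs : a / p ≤ (1 + p ^ (p - 1)) * b := by
    have : a - (p - 1) / p * a = a / p := by field_simp; ring
    linarith
  calc a = p * (a / p) := by field_simp
    _ ≤ p * ((1 + p ^ (p - 1)) * b) := by gcongr
    _ = (p + p ^ p) * b := by rw [hpp]; ring

end DoublingEstimate

/-- Doubling estimate: if `f` is nonnegative, nondecreasing, and satisfies the abstract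
Hölder estimate `f(N) ≤ f(N') + p^{(p-1)/p} f(N)^{(p−1)/p} p^{1/p} f(N')^{1/p}`
whenever `N ≤ 2N'`, then `f(N) ≤ C f(N')` whenever `N ≤ 2N'`, with `C = C(p)`. -/
theorem doubling_estimate (p : ℝ) (hp : 1 < p) :
    ∃ C : ℝ, 0 < C ∧
      ∀ f : ℕ → ℝ, (∀ N, 0 ≤ f N) → (∀ N : ℕ, 1 ≤ N → f (N - 1) ≤ f N) →
        (∀ N N' : ℕ, N ≤ 2 * N' →
          f N ≤ f N' + p ^ ((p - 1) / p) * f N ^ ((p - 1) / p) * (p ^ (1 / p) * f N' ^ (1 / p))) →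
        ∀ N N' : ℕ, N ≤ 2 * N' → f N ≤ C * f N' := by
  refine ⟨p + p ^ p, by positivity, fun f hf0 _ hholder N N' hN ↦ ?_⟩
  exact DoublingEstimate.le_mul_of_le_add_holder hp (hf0 N) (hf0 N') (hholder N N' hN)
end
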